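/- arXiv:1110.3533 — 6 statements merged into one kernel-verified Lean document; each statement's English description precedes it below -/
import Mathlib

section
/- For every real number x with 0 < |x| < 2π, the series ∑_{k≥1} (2 ζ(2k) (-1)^k / (2k (2π)^{2k})) x^{2k} converges and equals log(x/(1−e^{−x})) − x/2. (This is the paper's identity log(x/(1−e^{−x})) − x/2 = ∑_{k≥1} 2ζ(2k) x^{2k} / (2k (2πi)^{2k}), using (2πi)^{2k} = (−1)^k (2π)^{2k}.) -/
open Real

/-- The Riemann zeta value `ζ(n) = ∑_{m ≥ 1} 1/m^n`, as a real number. -/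
noncomputable def zetaVal (n : ℕ) : ℝ := ∑' m : ℕ, 1 / ((m : ℝ) + 1) ^ n

/-!
Writing `x = 2πr`, the identity `x / (1 - e^{-x}) = e^{x/2} · (πr / sinh (πr))` turns the left
side into `-log (sinh (πr) / (πr))`. Euler's product `sinh (πr) / (πr) = ∏ₙ (1 + r²/n²)` makes this
`-∑ₙ log (1 + r²/n²)`. Expanding each logarithm in its power series and exchanging the two sums
collects `ζ(2k) r^{2k}` as the coefficient of `r^{2k}`; the exchange is legitimate for `|r| < 1`,
where the double series is dominated by `∑ₙ r²/n² · ∑ₖ r^{2k}`.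
-/

open Filter Finset Topology

theorem Real.tendsto_euler_sinh_prod (x : ℝ) :
    Tendsto (fun n : ℕ => π * x * ∏ j ∈ range n, (1 + x ^ 2 / ((j : ℝ) + 1) ^ 2))
      atTop (𝓝 (sinh (π * x))) := by
  convert (Complex.continuous_im.tendsto _).comp
    (Complex.tendsto_euler_sin_prod (x * Complex.I)) using 1
  · ext n
    have hfactor (j : ℕ) : (1 : ℂ) - (x * Complex.I) ^ 2 / ((j : ℂ) + 1) ^ 2
        = ((1 + x ^ 2 / ((j : ℝ) + 1) ^ 2 : ℝ) : ℂ) := by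
      push_cast; rw [mul_pow, Complex.I_sq]; ring
    simp only [Function.comp_apply, hfactor, ← Complex.ofReal_prod]
    generalize ∏ j ∈ range n, (1 + x ^ 2 / ((j : ℝ) + 1) ^ 2) = P
    simp [Complex.mul_im]
  · rw [← mul_assoc, ← Complex.ofReal_mul, Complex.sin_mul_I, ← Complex.ofReal_sinh,
      Complex.mul_I_im, Complex.ofReal_re]

theorem Real.hasSum_log_of_tendsto_prod {f : ℕ → ℝ} (hf : ∀ j, 1 ≤ f j) {P : ℝ}
    (h : Tendsto (fun n => ∏ j ∈ range n, f j) atTop (𝓝 P)) :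
    HasSum (fun j => log (f j)) (log P) := by
  have hP : 1 ≤ P := ge_of_tendsto' h fun n => Finset.one_le_prod fun j _ => hf j
  refine (hasSum_iff_tendsto_nat_of_nonneg (fun j => log_nonneg (hf j)) _).2 ?_
  refine ((continuousAt_log (by positivity)).tendsto.comp h).congr fun n => ?_
  exact log_prod fun j _ => (zero_lt_one.trans_le (hf j)).ne'

theorem Real.hasSum_neg_one_pow_mul_pow_div_log_one_add {x : ℝ} (h : |x| < 1) :
    HasSum (fun k : ℕ => (-1) ^ k * x ^ (k + 1) / (k + 1)) (log (1 + x)) := by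
  have := (hasSum_pow_div_log_of_abs_lt_one (x := -x) (by rwa [abs_neg])).neg
  rw [sub_neg_eq_add, neg_neg] at this
  refine this.congr_fun fun k => ?_
  rw [neg_pow x]; ring

theorem Real.hasSum_tsum_pow_div_tsum_log_one_add {a : ℕ → ℝ} {c : ℝ} (ha : Summable a)
    (hac : ∀ j, |a j| ≤ c) (hc : c < 1) :
    HasSum (fun k : ℕ => (-1) ^ k * (∑' j, a j ^ (k + 1)) / (k + 1))
      (∑' j, log (1 + a j)) := by
  set F : ℕ × ℕ → ℝ := fun p => (-1) ^ p.2 * a p.1 ^ (p.2 + 1) / (p.2 + 1)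
  have hc0 : 0 ≤ c := (abs_nonneg _).trans (hac 0)
  have hF : Summable F := by
    refine Summable.of_norm_bounded ((ha.abs.mul_of_nonneg
      (summable_geometric_of_lt_one hc0 hc) (fun _ => abs_nonneg _)
      (fun _ => pow_nonneg hc0 _))) fun p => ?_
    calc ‖F p‖ = |a p.1| ^ (p.2 + 1) / (p.2 + 1) := by
          simp only [F, Real.norm_eq_abs, abs_div, abs_mul, abs_pow, abs_neg, abs_one, one_pow,
            one_mul]
          rw [abs_of_pos (by positivity : (0 : ℝ) < p.2 + 1)]
      _ ≤ |a p.1| * |a p.1| ^ p.2 := by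
          rw [pow_succ']; exact div_le_self (by positivity) (by simp)
      _ ≤ |a p.1| * c ^ p.2 := by gcongr; exact hac _
  have hrow : HasSum (fun j => log (1 + a j)) (∑' p, F p) :=
    hF.hasSum.prod_fiberwise fun j => by
      simpa only [F] using hasSum_neg_one_pow_mul_pow_div_log_one_add ((hac j).trans_lt hc)
  have hcol : HasSum (fun k => ∑' j, F (j, k)) (∑' p, F p) :=
    ((Equiv.prodComm ℕ ℕ).hasSum_iff.2 hF.hasSum).prod_fiberwise fun k =>
      (((Equiv.prodComm ℕ ℕ).summable_iff.2 hF).prod_factor k).hasSum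
  rw [← hrow.tsum_eq] at hcol
  refine hcol.congr_fun fun k => ?_
  simp only [F, tsum_div_const, tsum_mul_left]

theorem tsum_div_nat_add_one_pow (r : ℝ) (n : ℕ) :
    ∑' j : ℕ, (r / ((j : ℝ) + 1)) ^ n = r ^ n * zetaVal n := by
  simp_rw [div_pow, div_eq_mul_one_div (r ^ n)]
  exact tsum_mul_left

theorem hasSum_zetaVal_log_sinh_div {r : ℝ} (hr0 : r ≠ 0) (hr : r ^ 2 < 1) :
    HasSum (fun k : ℕ => (-1) ^ k * (r ^ (2 * (k + 1)) * zetaVal (2 * (k + 1))) / (k + 1))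
      (log (sinh (π * r) / (π * r))) := by
  have ha : Summable fun j : ℕ => (r / ((j : ℝ) + 1)) ^ 2 := by
    refine (((summable_nat_add_iff 1).2 (Real.summable_nat_pow_inv.2 one_lt_two)).mul_left
      (r ^ 2)).congr fun j => ?_
    push_cast
    rw [div_pow, div_eq_mul_inv]
  have hac (j : ℕ) : |(r / ((j : ℝ) + 1)) ^ 2| ≤ r ^ 2 := by
    rw [abs_of_nonneg (sq_nonneg _), div_pow]
    exact div_le_self (sq_nonneg r) (one_le_pow₀ (by simp))
  have hprod : Tendsto (fun n => ∏ j ∈ range n, (1 + (r / ((j : ℝ) + 1)) ^ 2)) atTop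
      (𝓝 (sinh (π * r) / (π * r))) := by
    refine ((tendsto_euler_sinh_prod r).div_const (π * r)).congr fun n => ?_
    simp only [div_pow]
    field_simp
  have hlog := hasSum_log_of_tendsto_prod (fun j => le_add_of_nonneg_right (sq_nonneg _)) hprod
  simpa only [hlog.tsum_eq, ← pow_mul, tsum_div_nat_add_one_pow]
    using hasSum_tsum_pow_div_tsum_log_one_add ha hac hr

theorem Real.log_div_one_sub_exp_neg {x : ℝ} (hx : x ≠ 0) :
    log (x / (1 - exp (-x))) = x / 2 - log (sinh (x / 2) / (x / 2)) := by
  have hs : sinh (x / 2) ≠ 0 := sinh_ne_zero.2 (div_ne_zero hx two_ne_zero)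
  have hquot : x / (1 - exp (-x)) = exp (x / 2) * (sinh (x / 2) / (x / 2))⁻¹ := by
    have he : exp (-x) = (exp (x / 2))⁻¹ ^ 2 := by
      rw [← exp_neg, ← exp_nat_mul]; ring_nf
    have : exp (x / 2) ≠ 0 := exp_ne_zero _
    rw [he, sinh_eq, exp_neg]
    field_simp
  rw [hquot, log_mul (exp_ne_zero _) (inv_ne_zero (div_ne_zero hs (div_ne_zero hx two_ne_zero))),
    log_exp, log_inv]
  ring

/-- For `0 < |x| < 2π`, the series
`∑_{k ≥ 1} (2 ζ(2k) (-1)^k / (2k (2π)^{2k})) x^{2k}` converges and equals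
`log (x / (1 - e^{-x})) - x/2`. -/
theorem stmt0 (x : ℝ) (hx : 0 < |x|) (hx2 : |x| < 2 * π) :
    HasSum
      (fun k : ℕ =>
        2 * zetaVal (2 * (k + 1)) * (-1) ^ (k + 1)
            / ((2 * ((k : ℝ) + 1)) * (2 * π) ^ (2 * (k + 1)))
          * x ^ (2 * (k + 1)))
      (Real.log (x / (1 - Real.exp (-x))) - x / 2) := by
  obtain ⟨r, rfl⟩ : ∃ r, x = 2 * π * r := ⟨x / (2 * π), by field_simp⟩
  have hr0 : r ≠ 0 := by grind
  have hr : r ^ 2 < 1 := by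
    rw [abs_mul, abs_of_pos (by positivity : 0 < 2 * π)] at hx2
    exact (sq_lt_one_iff_abs_lt_one r).2 ((mul_lt_iff_lt_one_right (by positivity)).1 hx2)
  rw [log_div_one_sub_exp_neg (by positivity), sub_sub_cancel_left,
    show 2 * π * r / 2 = π * r by ring]
  refine (hasSum_zetaVal_log_sinh_div hr0 hr).neg.congr_fun fun k => ?_
  field_simp
  ring
end

section
/- For every real number x with 0 < |x| < 2π, log(x/(1−e^{−x})) − x/2 = −∑_{k≥1} (B_{2k} / (2k · (2k)!)) x^{2k}, where the series on the right converges and B_{2k} denote the Bernoulli numbers. -/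
/-!
Euler's product `sinh y = y ∏_{j ≥ 1} (1 + y² / (π j)²)` turns `log (sinh y / y)` into
`∑_j log (1 + (y / π)² / j²)`. For `|y| < π` every factor lies in `[1, 2)`, so expanding each
logarithm as a power series gives an absolutely convergent double series; summing it in the other
order produces the zeta values `ζ(2k)`, which Euler's formula expresses through `B_{2k}`. With
`y = x / 2`, the identity `x / (1 - e^{-x}) = e^{x/2} · (x/2) / sinh (x/2)` finishes the proof.
-/

open Real Filter Finset Topology
open scoped Nat

namespace Real

theorem tendsto_euler_sinh_prod_s3 (y : ℝ) :
    Tendsto (fun n : ℕ => y * ∏ j ∈ range n, (1 + (y / π) ^ 2 / ((j : ℝ) + 1) ^ 2)) atTop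
      (𝓝 (sinh y)) := by
  have hπ : (π : ℂ) ≠ 0 := Complex.ofReal_ne_zero.mpr pi_ne_zero
  have h := (Complex.tendsto_euler_sin_prod (y * Complex.I / π)).const_mul (-Complex.I)
  rw [mul_div_cancel₀ _ hπ, Complex.sin_mul_I, ← mul_assoc, mul_comm (-Complex.I),
    mul_assoc, neg_mul, Complex.I_mul_I, neg_neg, mul_one, ← Complex.ofReal_sinh] at h
  refine tendsto_ofReal_iff.mp (h.congr fun n => ?_)
  have hterm (j : ℕ) : (1 : ℂ) - (y * Complex.I / π) ^ 2 / ((j : ℂ) + 1) ^ 2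
      = ((1 + (y / π) ^ 2 / ((j : ℝ) + 1) ^ 2 : ℝ) : ℂ) := by
    push_cast
    rw [div_pow, mul_pow, Complex.I_sq]
    ring
  rw [prod_congr rfl fun j _ => hterm j, ← Complex.ofReal_prod, Complex.ofReal_mul]
  linear_combination
    (-(y : ℂ) * ((∏ j ∈ range n, (1 + (y / π) ^ 2 / ((j : ℝ) + 1) ^ 2) : ℝ) : ℂ)) * Complex.I_sq

theorem hasSum_log_euler_sinh_prod {y : ℝ} (hy : y ≠ 0) :
    HasSum (fun j : ℕ => log (1 + (y / π) ^ 2 / ((j : ℝ) + 1) ^ 2)) (log (sinh y / y)) := by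
  have hsinh : sinh y / y ≠ 0 := div_ne_zero (sinh_ne_zero.mpr hy) hy
  rw [hasSum_iff_tendsto_nat_of_nonneg fun j => log_nonneg (by simp; positivity)]
  refine ((continuousAt_log hsinh).tendsto.comp
    ((tendsto_euler_sinh_prod_s3 y).div_const y)).congr fun n => ?_
  rw [Function.comp_apply, mul_div_cancel_left₀ _ hy, log_prod fun j _ => by positivity]

theorem hasSum_log_one_add_of_abs_lt_one {u : ℝ} (h : |u| < 1) :
    HasSum (fun k : ℕ => (-1) ^ k * u ^ (k + 1) / ((k : ℝ) + 1)) (log (1 + u)) := by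
  have h' := (hasSum_pow_div_log_of_abs_lt_one (x := -u) (by rwa [abs_neg])).neg
  rw [neg_neg, sub_neg_eq_add] at h'
  refine h'.congr_fun fun k => ?_
  rw [neg_pow u, pow_succ (-1 : ℝ)]
  ring

theorem hasSum_tsum_log_one_add {t : ℕ → ℝ} {c : ℝ} (ht : Summable t) (hc : c < 1)
    (htc : ∀ j, |t j| ≤ c) :
    HasSum (fun k : ℕ => (-1) ^ k * (∑' j, t j ^ (k + 1)) / ((k : ℝ) + 1))
      (∑' j, log (1 + t j)) := by
  set a : ℕ × ℕ → ℝ := fun p => (-1) ^ p.2 * t p.1 ^ (p.2 + 1) / ((p.2 : ℝ) + 1)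
  have hc0 : 0 ≤ c := (abs_nonneg _).trans (htc 0)
  have ha : Summable a := by
    have hdom : Summable fun p : ℕ × ℕ => |t p.1| * c ^ p.2 :=
      ht.abs.mul_of_nonneg (summable_geometric_of_lt_one hc0 hc) (fun _ => abs_nonneg _)
        (fun _ => pow_nonneg hc0 _)
    refine Summable.of_norm_bounded hdom fun p => ?_
    have hk : (1 : ℝ) ≤ p.2 + 1 := by simp
    calc ‖a p‖ = |t p.1| * |t p.1| ^ p.2 / (p.2 + 1) := by
          rw [Real.norm_eq_abs, abs_div, abs_mul, abs_pow, abs_neg, abs_one, one_pow, one_mul,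
            abs_pow, pow_succ, mul_comm, abs_of_pos (by positivity : (0 : ℝ) < p.2 + 1)]
      _ ≤ |t p.1| * |t p.1| ^ p.2 := div_le_self (by positivity) hk
      _ ≤ |t p.1| * c ^ p.2 := by gcongr; exact htc _
  have hrow (j : ℕ) : HasSum (fun k => a (j, k)) (log (1 + t j)) :=
    hasSum_log_one_add_of_abs_lt_one (u := t j) ((htc j).trans_lt hc)
  rw [(ha.hasSum.prod_fiberwise hrow).tsum_eq]
  have hswap : HasSum (fun p : ℕ × ℕ => a p.swap) (∑' p, a p) :=
    (Equiv.prodComm ℕ ℕ).hasSum_iff.mpr ha.hasSum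
  refine hswap.prod_fiberwise fun k => ?_
  have hcol : Summable fun j => a (j, k) :=
    ((Equiv.prodComm ℕ ℕ).summable_iff.mpr ha).prod_factor k
  change HasSum (fun j => a (j, k)) _
  rw [hcol.hasSum_iff, ← tsum_mul_left, ← tsum_div_const]

theorem hasSum_one_div_nat_add_one_pow_two_mul {k : ℕ} (hk : k ≠ 0) :
    HasSum (fun j : ℕ => 1 / ((j : ℝ) + 1) ^ (2 * k))
      ((-1) ^ (k + 1) * 2 ^ (2 * k - 1) * π ^ (2 * k) * bernoulli (2 * k) / (2 * k)!) := by
  -- the `n = 0` term of `hasSum_zeta_nat` is the junk value `1 / 0 = 0`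
  have h := (hasSum_nat_add_iff' 1).mpr (hasSum_zeta_nat hk)
  simpa [hk] using h

theorem hasSum_log_sinh_div {y : ℝ} (hy0 : y ≠ 0) (hy : |y| < π) :
    HasSum (fun k : ℕ => (bernoulli (2 * (k + 1)) : ℝ) / (2 * ((k : ℝ) + 1) * (2 * (k + 1))!)
      * (2 * y) ^ (2 * (k + 1))) (log (sinh y / y)) := by
  have hc : (y / π) ^ 2 < 1 := by
    rw [div_pow, div_lt_one (by positivity), ← sq_abs]
    exact pow_lt_pow_left₀ hy (abs_nonneg y) two_ne_zero
  set c := (y / π) ^ 2 with hc_def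
  have ht : Summable fun j : ℕ => c / ((j : ℝ) + 1) ^ 2 := by
    simpa [div_eq_mul_inv] using
      ((hasSum_one_div_nat_add_one_pow_two_mul one_ne_zero).summable.mul_left c)
  have htc (j : ℕ) : |c / ((j : ℝ) + 1) ^ 2| ≤ c := by
    rw [abs_of_nonneg (by positivity)]
    exact div_le_self (by positivity) (by nlinarith [j.cast_nonneg (α := ℝ)])
  have h := hasSum_tsum_log_one_add ht hc htc
  rw [(hasSum_log_euler_sinh_prod hy0).tsum_eq] at h
  refine h.congr_fun fun k => ?_
  have hz := ((hasSum_one_div_nat_add_one_pow_two_mul (k := k + 1) (by omega)).mul_left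
    (c ^ (k + 1))).tsum_eq
  have hterm (j : ℕ) : (c / ((j : ℝ) + 1) ^ 2) ^ (k + 1)
      = c ^ (k + 1) * (1 / ((j : ℝ) + 1) ^ (2 * (k + 1))) := by
    rw [div_pow, ← pow_mul ((j : ℝ) + 1), mul_one_div]
  have hsign : (-1 : ℝ) ^ k * (-1) ^ (k + 1 + 1) = 1 := by
    rw [← pow_add]; exact Even.neg_one_pow ⟨k + 1, by ring⟩
  rw [tsum_congr hterm, hz, hc_def, ← pow_mul, div_pow,
    show 2 * (k + 1) - 1 = 2 * k + 1 by omega]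
  field_simp
  linear_combination (-(bernoulli (2 * (k + 1)) : ℝ) * (2 * y) ^ (2 * (k + 1))) * hsign

theorem div_one_sub_exp_neg_eq (x : ℝ) :
    x / (1 - exp (-x)) = exp (x / 2) * ((x / 2) / sinh (x / 2)) := by
  have hsplit : 1 - exp (-x) = 2 * exp (-(x / 2)) * sinh (x / 2) := by
    have hmul : exp (-(x / 2)) * exp (x / 2) = 1 := by rw [← exp_add]; simp
    have hsq : exp (-(x / 2)) * exp (-(x / 2)) = exp (-x) := by rw [← exp_add]; ring_nf
    rw [sinh_eq]
    linear_combination hsq - hmul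
  rw [hsplit, exp_neg]
  field_simp

theorem log_div_one_sub_exp_neg_sub_half {x : ℝ} (hx : x ≠ 0) :
    log (x / (1 - exp (-x))) - x / 2 = -log (sinh (x / 2) / (x / 2)) := by
  have hx2 : x / 2 ≠ 0 := by positivity
  rw [div_one_sub_exp_neg_eq, log_mul (exp_ne_zero _)
    (div_ne_zero hx2 (sinh_ne_zero.mpr hx2)), log_exp, ← inv_div (sinh (x / 2)), log_inv]
  ring

end Real

/-- For `0 < |x| < 2π`,
`log (x/(1 - e^{-x})) - x/2 = -∑_{k ≥ 1} (B_{2k} / (2k · (2k)!)) x^{2k}`, where the series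
on the right converges and `B_{2k}` are the Bernoulli numbers (with the convention
`x/(e^x - 1) = ∑ B_n x^n / n!`).  The `HasSum` statement asserts both the convergence of
the series and that its sum is `-(log (x/(1 - e^{-x})) - x/2)`. -/
theorem stmt3 (x : ℝ) (hx : 0 < |x|) (hx2 : |x| < 2 * π) :
    HasSum
      (fun k : ℕ =>
        ((bernoulli (2 * (k + 1)) : ℝ)
            / ((2 * ((k : ℝ) + 1)) * (Nat.factorial (2 * (k + 1)) : ℝ)))
          * x ^ (2 * (k + 1)))
      (-(Real.log (x / (1 - Real.exp (-x))) - x / 2)) := by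
  have hx0 : x ≠ 0 := abs_pos.mp hx
  have h := hasSum_log_sinh_div (y := x / 2) (by positivity) (by rw [abs_div, abs_two]; linarith)
  rwa [mul_div_cancel₀ x two_ne_zero, ← neg_neg (log _), ← log_div_one_sub_exp_neg_sub_half hx0]
    at h
end

section
/- Let n ≥ 2 be an integer, let L > 0, and let φ : ℝⁿ → ℝ be continuous with compact support. For ε ∈ (0, L) define W(ε) = ∫_{ℝⁿ} φ(x₁,…,xₙ) · ∏_{i=1}^{n} ( ∫_{ε}^{L} t^{−3/2} (x_i − x_{i+1}) e^{−(x_i − x_{i+1})²/t} dt ) dx, where indices are cyclic, i.e. x_{n+1} := x₁. Then the limit of W(ε) as ε → 0⁺ exists; that is, there is a real number c such that W(ε) → c as ε tends to 0 from the right. -/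
open MeasureTheory Real Set Filter

/-- The regularized propagator integrand. -/
noncomputable def Pker (u t : ℝ) : ℝ := t ^ (-(3:ℝ)/2) * u * Real.exp (-u ^ 2 / t)

lemma Pker_meas2 : Measurable fun p : ℝ × ℝ => Pker p.1 p.2 := by
  unfold Pker
  exact ((measurable_snd.pow_const (-(3:ℝ)/2)).mul measurable_fst).mul
    (Real.measurable_exp.comp (((measurable_fst.pow_const 2).neg).div measurable_snd))

lemma Pker_meas (u : ℝ) : Measurable fun t : ℝ => Pker u t :=
  Pker_meas2.comp (measurable_const.prodMk measurable_id)

lemma exp_neg_le {a : ℝ} (ha : 0 < a) : Real.exp (-a) ≤ 4 / a ^ 2 := by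
  have h1 : a ^ 2 / 4 ≤ Real.exp a := by
    have h2 : Real.exp a = Real.exp (a/2) * Real.exp (a/2) := by
      rw [← Real.exp_add]; ring_nf
    nlinarith [Real.add_one_le_exp (a/2), Real.exp_pos (a/2)]
  rw [Real.exp_neg]
  have h3 : (0:ℝ) < a ^ 2 / 4 := by positivity
  calc (Real.exp a)⁻¹ ≤ (a ^ 2 / 4)⁻¹ := by
        exact inv_anti₀ h3 h1
    _ = 4 / a ^ 2 := by rw [inv_div]

lemma Pker_bound1 {u t : ℝ} (ht : 0 < t) : ‖Pker u t‖ ≤ |u| * t ^ (-(3:ℝ)/2) := by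
  have hr : (0:ℝ) ≤ t ^ (-(3:ℝ)/2) := Real.rpow_nonneg ht.le _
  have he : Real.exp (-u ^ 2 / t) ≤ 1 := by
    rw [Real.exp_le_one_iff]
    exact div_nonpos_of_nonpos_of_nonneg (neg_nonpos_of_nonneg (sq_nonneg u)) ht.le
  have he0 : (0:ℝ) < Real.exp (-u ^ 2 / t) := Real.exp_pos _
  rw [Pker, Real.norm_eq_abs, abs_mul, abs_mul, abs_of_nonneg hr,
    abs_of_nonneg he0.le]
  calc t ^ (-(3:ℝ)/2) * |u| * Real.exp (-u ^ 2 / t)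
      ≤ t ^ (-(3:ℝ)/2) * |u| * 1 :=
        mul_le_mul_of_nonneg_left he (mul_nonneg hr (abs_nonneg u))
    _ = |u| * t ^ (-(3:ℝ)/2) := by ring

lemma Pker_bound2 {u t : ℝ} (hu : u ≠ 0) (ht : 0 < t) :
    ‖Pker u t‖ ≤ 4 * t ^ ((1:ℝ)/2) / |u| ^ 3 := by
  have hr : (0:ℝ) ≤ t ^ (-(3:ℝ)/2) := Real.rpow_nonneg ht.le _
  have ha : (0:ℝ) < u ^ 2 / t := div_pos (by positivity) ht
  have he : Real.exp (-u ^ 2 / t) ≤ 4 * t ^ 2 / u ^ 4 := by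
    rw [show -u ^ 2 / t = -(u ^ 2 / t) from by ring]
    calc Real.exp (-(u ^ 2 / t)) ≤ 4 / (u ^ 2 / t) ^ 2 := exp_neg_le ha
      _ = 4 * t ^ 2 / u ^ 4 := by
          rw [div_pow, div_div_eq_mul_div]
          rw [show (u ^ 2) ^ 2 = u ^ 4 from by ring]
  have he0 : (0:ℝ) < Real.exp (-u ^ 2 / t) := Real.exp_pos _
  rw [Pker, Real.norm_eq_abs, abs_mul, abs_mul, abs_of_nonneg hr, abs_of_nonneg he0.le]
  have key : t ^ (-(3:ℝ)/2) * |u| * (4 * t ^ 2 / u ^ 4) = 4 * t ^ ((1:ℝ)/2) / |u| ^ 3 := by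
    have hu4 : u ^ 4 = |u| ^ 4 := by
      rw [← abs_pow]; exact (abs_of_nonneg (by positivity)).symm
    have ht2 : t ^ (-(3:ℝ)/2) * t ^ 2 = t ^ ((1:ℝ)/2) := by
      rw [← Real.rpow_natCast t 2, ← Real.rpow_add ht]
      norm_num
    have habs : (0:ℝ) < |u| := abs_pos.mpr hu
    rw [hu4, show t ^ (-(3:ℝ)/2) * |u| * (4 * t ^ 2 / |u| ^ 4)
        = 4 * (t ^ (-(3:ℝ)/2) * t ^ 2) * (|u| / |u| ^ 4) from by ring, ht2,
      show |u| / |u| ^ 4 = 1 / |u| ^ 3 from by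
        rw [show |u| ^ 4 = |u| ^ 3 * |u| from by ring]
        rw [div_mul_eq_div_div_swap]
        rw [div_self habs.ne']]
    ring
  calc t ^ (-(3:ℝ)/2) * |u| * Real.exp (-u ^ 2 / t)
      ≤ t ^ (-(3:ℝ)/2) * |u| * (4 * t ^ 2 / u ^ 4) := by
        apply mul_le_mul_of_nonneg_left he (by positivity)
    _ = 4 * t ^ ((1:ℝ)/2) / |u| ^ 3 := key

lemma halfpow_integrableOn {c : ℝ} : IntegrableOn (fun t : ℝ => t ^ ((1:ℝ)/2)) (Ioc 0 c) := by
  have := (intervalIntegral.intervalIntegrable_rpow' (a := 0) (b := c)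
    (by norm_num : (-1:ℝ) < 1/2))
  exact this.1

lemma Pker_integrableOn (u : ℝ) (c : ℝ) : IntegrableOn (Pker u) (Ioc 0 c) := by
  rcases eq_or_ne u 0 with rfl | hu
  · have : Pker (0:ℝ) = fun _ : ℝ => (0:ℝ) := by
      funext t; simp [Pker]
    rw [this]
    exact integrableOn_zero
  · apply Integrable.mono' ((halfpow_integrableOn.const_mul 4).div_const (|u| ^ 3))
    · exact (Pker_meas u).aestronglyMeasurable
    · rw [ae_restrict_iff' measurableSet_Ioc]
      exact ae_of_all _ fun t ht => Pker_bound2 hu ht.1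

lemma sq_rpow_threehalf (u : ℝ) : ((u:ℝ) ^ 2) ^ ((3:ℝ)/2) = |u| ^ 3 := by
  rw [← sq_abs, ← Real.rpow_natCast |u| 2, ← Real.rpow_mul (abs_nonneg u)]
  rw [show ((2:ℕ):ℝ) * ((3:ℝ)/2) = ((3:ℕ):ℝ) by norm_num, Real.rpow_natCast]

lemma sq_rpow_neghalf {u : ℝ} (hu : u ≠ 0) : ((u:ℝ) ^ 2) ^ (-(1:ℝ)/2) = |u|⁻¹ := by
  rw [← sq_abs, ← Real.rpow_natCast |u| 2, ← Real.rpow_mul (abs_nonneg u)]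
  rw [show ((2:ℕ):ℝ) * (-(1:ℝ)/2) = -1 by norm_num, Real.rpow_neg_one]

lemma Pker_key_bound (u : ℝ) {ε L : ℝ} (hε : 0 < ε) (hL : 0 < L) :
    ∫ t in Ioc ε L, ‖Pker u t‖ ≤ 5 := by
  rcases eq_or_ne u 0 with rfl | hu
  · have : (fun t : ℝ => ‖Pker (0:ℝ) t‖) = fun _ => (0:ℝ) := by
      funext t; simp [Pker]
    rw [this, integral_zero]
    norm_num
  · have hu2 : (0:ℝ) < u ^ 2 := by positivity
    have habs : (0:ℝ) < |u| := abs_pos.mpr hu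
    set A := Ioc ε L ∩ Ioc 0 (u ^ 2) with hA
    set B := Ioc ε L \ Ioc 0 (u ^ 2) with hB
    have hsubIoc : Ioc ε L ⊆ Ioc 0 L := Ioc_subset_Ioc_left hε.le
    have hIoc : IntegrableOn (fun t => ‖Pker u t‖) (Ioc ε L) :=
      ((Pker_integrableOn u L).mono_set hsubIoc).norm
    have hBsub : B ⊆ Ioi (u ^ 2) := by
      intro t ht
      rcases ht with ⟨ht1, ht2⟩
      simp only [mem_Ioc, not_and, not_le] at ht2
      exact ht2 (hε.trans ht1.1)
    have hApos : ∀ t ∈ A, (0:ℝ) < t := fun t ht => hε.trans ht.1.1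
    have hBpos : ∀ t ∈ B, (0:ℝ) < t := fun t ht => hε.trans ht.1.1
    -- split
    have hsplit : ∫ t in Ioc ε L, ‖Pker u t‖
        = (∫ t in A, ‖Pker u t‖) + ∫ t in B, ‖Pker u t‖ := by
      rw [← setIntegral_union (disjoint_sdiff_self_right.mono_left inter_subset_right)
        (measurableSet_Ioc.diff measurableSet_Ioc)
        (hIoc.mono_set inter_subset_left) (hIoc.mono_set diff_subset),
        inter_union_diff]
    -- bound on A
    have hgint : IntegrableOn (fun t : ℝ => 4 * t ^ ((1:ℝ)/2) / |u| ^ 3) (Ioc 0 (u ^ 2)) :=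
      (halfpow_integrableOn.const_mul 4).div_const (|u| ^ 3)
    have hAval : ∫ t in Ioc 0 (u ^ 2), 4 * t ^ ((1:ℝ)/2) / |u| ^ 3 = 8/3 := by
      have : (fun t : ℝ => 4 * t ^ ((1:ℝ)/2) / |u| ^ 3)
          = fun t : ℝ => (4 / |u| ^ 3) * t ^ ((1:ℝ)/2) := by
        funext t; ring
      rw [this, integral_const_mul, ← intervalIntegral.integral_of_le hu2.le,
        integral_rpow (Or.inl (by norm_num : (-1:ℝ) < 1/2))]
      rw [Real.zero_rpow (by norm_num : ((1:ℝ)/2 + 1) ≠ 0)]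
      rw [show ((1:ℝ)/2 + 1) = (3:ℝ)/2 by norm_num, sq_rpow_threehalf]
      field_simp
      ring
    have hboundA : ∫ t in A, ‖Pker u t‖ ≤ 8/3 := by
      rw [← hAval]
      calc ∫ t in A, ‖Pker u t‖
          ≤ ∫ t in A, 4 * t ^ ((1:ℝ)/2) / |u| ^ 3 := by
            apply setIntegral_mono_on (hIoc.mono_set inter_subset_left)
              (hgint.mono_set inter_subset_right)
              (measurableSet_Ioc.inter measurableSet_Ioc)
            exact fun t ht => Pker_bound2 hu (hApos t ht)
        _ ≤ ∫ t in Ioc 0 (u ^ 2), 4 * t ^ ((1:ℝ)/2) / |u| ^ 3 := by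
            apply setIntegral_mono_set hgint
            · exact (ae_restrict_mem measurableSet_Ioc).mono fun t ht => by
                have h0 : (0:ℝ) < t := ht.1
                positivity
            · exact HasSubset.Subset.eventuallyLE inter_subset_right
    -- bound on B
    have htint : IntegrableOn (fun t : ℝ => |u| * t ^ (-(3:ℝ)/2)) (Ioi (u ^ 2)) :=
      (integrableOn_Ioi_rpow_of_lt (by norm_num : -(3:ℝ)/2 < -1) hu2).const_mul |u|
    have hBval : ∫ t in Ioi (u ^ 2), |u| * t ^ (-(3:ℝ)/2) = 2 := by
      rw [integral_const_mul, integral_Ioi_rpow_of_lt (by norm_num : -(3:ℝ)/2 < -1) hu2]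
      rw [show (-(3:ℝ)/2 + 1) = -(1:ℝ)/2 by norm_num, sq_rpow_neghalf hu]
      field_simp
    have hboundB : ∫ t in B, ‖Pker u t‖ ≤ 2 := by
      rw [← hBval]
      calc ∫ t in B, ‖Pker u t‖
          ≤ ∫ t in B, |u| * t ^ (-(3:ℝ)/2) := by
            apply setIntegral_mono_on (hIoc.mono_set diff_subset)
              (htint.mono_set hBsub)
              (measurableSet_Ioc.diff measurableSet_Ioc)
            exact fun t ht => Pker_bound1 (hBpos t ht)
        _ ≤ ∫ t in Ioi (u ^ 2), |u| * t ^ (-(3:ℝ)/2) := by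
            apply setIntegral_mono_set htint
            · exact (ae_restrict_mem measurableSet_Ioi).mono fun t ht => by
                have h0 : (0:ℝ) < t := hu2.trans ht
                positivity
            · exact HasSubset.Subset.eventuallyLE hBsub
    rw [hsplit]
    linarith

lemma Pker_tendsto_inner (u : ℝ) {L : ℝ} (hL : 0 < L) :
    Tendsto (fun ε => ∫ t in Ioc ε L, Pker u t) (nhdsWithin 0 (Set.Ioi 0))
      (nhds (∫ t in Ioc 0 L, Pker u t)) := by
  have hint : IntegrableOn (Pker u) (Ioc 0 L) := Pker_integrableOn u L
  have key : ∀ ε : ℝ, ∫ t in Ioc ε L, Pker u t = ∫ t, (Ioc ε L).indicator (Pker u) t :=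
    fun ε => (integral_indicator measurableSet_Ioc).symm
  simp_rw [key]
  apply tendsto_integral_filter_of_dominated_convergence
    ((Ioc (0:ℝ) L).indicator fun t => ‖Pker u t‖)
  · exact Eventually.of_forall fun ε =>
      ((Pker_meas u).indicator measurableSet_Ioc).aestronglyMeasurable
  · filter_upwards [self_mem_nhdsWithin] with ε hε
    refine ae_of_all _ fun t => ?_
    rw [norm_indicator_eq_indicator_norm]
    exact Set.indicator_le_indicator_of_subset (Ioc_subset_Ioc_left (le_of_lt hε))
      (fun a => norm_nonneg _) t
  · exact IntegrableOn.integrable_indicator hint.norm measurableSet_Ioc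
  · refine ae_of_all _ fun t => ?_
    by_cases ht : t ∈ Ioc (0:ℝ) L
    · apply Tendsto.congr' _ tendsto_const_nhds
      filter_upwards [Ioo_mem_nhdsGT_of_mem ⟨le_refl (0:ℝ), ht.1⟩] with ε hε
      have htε : t ∈ Ioc ε L := ⟨hε.2, ht.2⟩
      rw [Set.indicator_of_mem ht, Set.indicator_of_mem htε]
    · apply Tendsto.congr' _ tendsto_const_nhds
      filter_upwards [self_mem_nhdsWithin] with ε hε
      have htε : t ∉ Ioc ε L := fun h => ht (Ioc_subset_Ioc_left (le_of_lt hε) h)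
      rw [Set.indicator_of_notMem ht, Set.indicator_of_notMem htε]

lemma Pker_inner_meas (ε L : ℝ) : Measurable fun u : ℝ => ∫ t in Ioc ε L, Pker u t :=
  (Pker_meas2.stronglyMeasurable.integral_prod_right').measurable

set_option maxHeartbeats 1000000 in
/-- For `n ≥ 2`, `L > 0` and a continuous compactly supported test function
`φ : ℝⁿ → ℝ`, the regularized wheel weight
`W(ε) = ∫_{ℝⁿ} φ(x) ∏_{i} ∫_ε^L t^{-3/2} (x_i - x_{i+1}) e^{-(x_i - x_{i+1})²/t} dt dx`
(indices cyclic) has a limit as `ε → 0⁺`. -/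
theorem stmt5 (n : ℕ) (hn : 2 ≤ n) (L : ℝ) (hL : 0 < L)
    (φ : (Fin n → ℝ) → ℝ) (hφc : Continuous φ) (hφs : HasCompactSupport φ) :
    ∃ c : ℝ,
      Filter.Tendsto
        (fun ε : ℝ =>
          ∫ x : Fin n → ℝ,
            φ x *
              ∏ i : Fin n,
                ∫ t in ε..L,
                  t ^ (-(3 : ℝ) / 2) * (x i - x ⟨((i : ℕ) + 1) % n, Nat.mod_lt _ (by omega)⟩) *
                    Real.exp (-(x i - x ⟨((i : ℕ) + 1) % n, Nat.mod_lt _ (by omega)⟩) ^ 2 / t))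
        (nhdsWithin 0 (Set.Ioi 0)) (nhds c) := by
  have hP : ∀ v t : ℝ, t ^ (-(3:ℝ)/2) * v * Real.exp (-v ^ 2 / t) = Pker v t := fun _ _ => rfl
  have main : ∀ ψ : Fin n → Fin n, ∃ c : ℝ,
      Filter.Tendsto
        (fun ε : ℝ => ∫ x : Fin n → ℝ, φ x * ∏ i : Fin n,
          ∫ t in ε..L, Pker (x i - x (ψ i)) t)
        (nhdsWithin 0 (Set.Ioi 0)) (nhds c) := by
    intro ψ
    refine ⟨∫ x : Fin n → ℝ, φ x * ∏ i : Fin n, ∫ t in Ioc 0 L, Pker (x i - x (ψ i)) t, ?_⟩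
    have hIoo : Ioo (0:ℝ) L ∈ nhdsWithin (0:ℝ) (Set.Ioi 0) :=
      Ioo_mem_nhdsGT_of_mem ⟨le_refl 0, hL⟩
    apply tendsto_integral_filter_of_dominated_convergence (fun x => ‖φ x‖ * 5 ^ n)
    · filter_upwards [hIoo] with ε hε
      have hmeas : ∀ i : Fin n, Measurable fun x : Fin n → ℝ =>
          ∫ t in ε..L, Pker (x i - x (ψ i)) t := by
        intro i
        have h1 : Measurable fun x : Fin n → ℝ =>
            ∫ t in Ioc ε L, Pker (x i - x (ψ i)) t :=
          (Pker_inner_meas ε L).comp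
            ((measurable_pi_apply i).sub (measurable_pi_apply (ψ i)))
        have h2 : (fun x : Fin n → ℝ => ∫ t in ε..L, Pker (x i - x (ψ i)) t)
            = fun x : Fin n → ℝ => ∫ t in Ioc ε L, Pker (x i - x (ψ i)) t := by
          funext x; rw [intervalIntegral.integral_of_le hε.2.le]
        rw [h2]; exact h1
      exact (hφc.measurable.mul
        (Finset.measurable_prod Finset.univ fun i _ => hmeas i)).aestronglyMeasurable
    · filter_upwards [hIoo] with ε hε
      refine ae_of_all _ fun x => ?_
      have hfac : ∀ i : Fin n, ‖∫ t in ε..L, Pker (x i - x (ψ i)) t‖ ≤ 5 := by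
        intro i
        rw [intervalIntegral.integral_of_le hε.2.le]
        exact (norm_integral_le_integral_norm _).trans (Pker_key_bound _ hε.1 hL)
      calc ‖φ x * ∏ i : Fin n, ∫ t in ε..L, Pker (x i - x (ψ i)) t‖
          = ‖φ x‖ * ∏ i : Fin n, ‖∫ t in ε..L, Pker (x i - x (ψ i)) t‖ := by
            rw [norm_mul, Real.norm_eq_abs (∏ _, _), Finset.abs_prod]
            simp only [Real.norm_eq_abs]
        _ ≤ ‖φ x‖ * ∏ _i : Fin n, (5:ℝ) :=
            mul_le_mul_of_nonneg_left
              (Finset.prod_le_prod (fun i _ => norm_nonneg _) (fun i _ => hfac i))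
              (norm_nonneg _)
        _ = ‖φ x‖ * 5 ^ n := by
            rw [Finset.prod_const, Finset.card_univ, Fintype.card_fin]
    · have hcs : HasCompactSupport fun x : Fin n → ℝ => ‖φ x‖ * (5:ℝ) ^ n :=
        HasCompactSupport.mul_right hφs.norm
      exact (hφc.norm.mul continuous_const).integrable_of_hasCompactSupport hcs
    · refine ae_of_all _ fun x => ?_
      have hfac : ∀ i : Fin n, Tendsto (fun ε => ∫ t in ε..L, Pker (x i - x (ψ i)) t)
          (nhdsWithin 0 (Set.Ioi 0)) (nhds (∫ t in Ioc 0 L, Pker (x i - x (ψ i)) t)) := by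
        intro i
        apply (Pker_tendsto_inner _ hL).congr'
        filter_upwards [hIoo] with ε hε
        rw [intervalIntegral.integral_of_le hε.2.le]
      exact Filter.Tendsto.const_mul _
        (tendsto_finset_prod Finset.univ fun i _ => hfac i)
  simp only [hP]
  exact main fun i => ⟨((i : ℕ) + 1) % n, Nat.mod_lt _ (by omega)⟩
end

section
/- Let n ≥ 2 be an integer and L > 0. The function on ℝⁿ × ℝ^{n−1} given by (t, u) ↦ ( ∏_{i=1}^{n−1} t_i^{−3/2} |u_i| e^{−u_i²/t_i} ) · t_n^{−3/2} ( ∑_{i=1}^{n−1} |u_i| ) e^{−(∑_{i=1}^{n−1} u_i)²/t_n} is Lebesgue integrable on the set Δⁿ(0,L) × ℝ^{n−1}, where Δⁿ(0,L) = { t ∈ ℝⁿ : 0 < t₁ ≤ t₂ ≤ ⋯ ≤ t_n ≤ L }. -/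
open MeasureTheory Real

open Set

lemma aux0 {c z : ℝ} (hc0 : 0 ≤ c) (hc1 : c ≤ 1) (hz : 0 ≤ z) :
    z ^ c * Real.exp (-z) ≤ 1 := by
  rcases le_or_gt z 1 with h | h
  · have h1 : z ^ c ≤ 1 := Real.rpow_le_one hz h hc0
    have h2 : Real.exp (-z) ≤ 1 := Real.exp_le_one_iff.2 (by linarith)
    nlinarith [Real.exp_pos (-z), Real.rpow_nonneg hz c]
  · have h1 : z ^ c ≤ z := by
      calc z ^ c ≤ z ^ (1:ℝ) := Real.rpow_le_rpow_of_exponent_le h.le hc1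
        _ = z := Real.rpow_one z
    have h2 : z ≤ Real.exp z := by linarith [Real.add_one_le_exp z]
    calc z ^ c * Real.exp (-z) ≤ Real.exp z * Real.exp (-z) := by
          apply mul_le_mul_of_nonneg_right (h1.trans h2) (Real.exp_pos _).le
      _ = 1 := by rw [← Real.exp_add]; simp

lemma aux1 {c s T : ℝ} (hc0 : 0 ≤ c) (hc1 : c ≤ 1) (hT : 0 < T) (hs : 0 ≤ s) :
    s ^ c * Real.exp (-(s / T)) ≤ T ^ c := by
  obtain ⟨q, hq0, rfl⟩ : ∃ q, 0 ≤ q ∧ s = T * q :=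
    ⟨s / T, by positivity, by field_simp⟩
  rw [mul_div_cancel_left₀ _ hT.ne', Real.mul_rpow hT.le hq0]
  calc T ^ c * q ^ c * Real.exp (-q) ≤ T ^ c * 1 := by
        rw [mul_assoc]
        exact mul_le_mul_of_nonneg_left (aux0 hc0 hc1 hq0) (by positivity)
    _ = T ^ c := by ring

lemma sq_rpow (u c : ℝ) : (u ^ 2) ^ c = |u| ^ (2 * c) := by
  rw [← sq_abs, ← Real.rpow_natCast |u| 2, ← Real.rpow_mul (abs_nonneg u)]
  norm_num

lemma factor_bound {L W T u : ℝ} (hT : 0 < T) (hTW : T ≤ W) (hTL : T ≤ L) :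
    T ^ (-(3:ℝ)/2) * |u| * Real.exp (-u ^ 2 / T) ≤
      2 ^ ((3:ℝ)/4) *
        (T ^ (-(3:ℝ)/4) *
          ((|u| ^ (-(1:ℝ)/2) * Real.exp (-u ^ 2 / (4*L))) * Real.exp (-u ^ 2 / (4*W)))) := by
  have hW : 0 < W := lt_of_lt_of_le hT hTW
  have hL : 0 < L := lt_of_lt_of_le hT hTL
  rcases eq_or_ne u 0 with rfl | hu
  · simp [Real.zero_rpow (by norm_num : (-(1:ℝ)/2) ≠ 0)]
  have hau : 0 < |u| := abs_pos.2 hu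
  -- split the exponential
  have p1 : Real.exp (-u ^ 2 / T) =
      Real.exp (-(u ^ 2 / (2*T))) * (Real.exp (-u ^ 2 / (4*T)) * Real.exp (-u ^ 2 / (4*T))) := by
    rw [← Real.exp_add, ← Real.exp_add]
    congr 1
    field_simp
    ring
  have p2L : Real.exp (-u ^ 2 / (4*T)) ≤ Real.exp (-u ^ 2 / (4*L)) := by
    apply Real.exp_le_exp.2
    rw [neg_div, neg_div, neg_le_neg_iff]
    apply div_le_div_of_nonneg_left (sq_nonneg u) (by linarith) (by linarith)
  have p2W : Real.exp (-u ^ 2 / (4*T)) ≤ Real.exp (-u ^ 2 / (4*W)) := by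
    apply Real.exp_le_exp.2
    rw [neg_div, neg_div, neg_le_neg_iff]
    apply div_le_div_of_nonneg_left (sq_nonneg u) (by linarith) (by linarith)
  have p3 : |u| ^ ((3:ℝ)/2) * Real.exp (-(u ^ 2 / (2*T))) ≤ (2*T) ^ ((3:ℝ)/4) := by
    have := aux1 (c := (3:ℝ)/4) (s := u ^ 2) (T := 2*T) (by norm_num) (by norm_num)
      (by linarith) (sq_nonneg u)
    rwa [sq_rpow, (by norm_num : 2 * ((3:ℝ)/4) = (3:ℝ)/2)] at this
  have hsplit : |u| = |u| ^ (-(1:ℝ)/2) * |u| ^ ((3:ℝ)/2) := by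
    rw [← Real.rpow_add hau]; norm_num
  calc T ^ (-(3:ℝ)/2) * |u| * Real.exp (-u ^ 2 / T)
      = (T ^ (-(3:ℝ)/2) * |u| ^ (-(1:ℝ)/2)) *
        ((|u| ^ ((3:ℝ)/2) * Real.exp (-(u ^ 2 / (2*T)))) *
          (Real.exp (-u ^ 2 / (4*T)) * Real.exp (-u ^ 2 / (4*T)))) := by
        rw [p1]; nth_rewrite 1 [hsplit]; ring
    _ ≤ (T ^ (-(3:ℝ)/2) * |u| ^ (-(1:ℝ)/2)) *
        ((2*T) ^ ((3:ℝ)/4) *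
          (Real.exp (-u ^ 2 / (4*L)) * Real.exp (-u ^ 2 / (4*W)))) := by
        apply mul_le_mul_of_nonneg_left _ (by positivity)
        apply mul_le_mul p3 (mul_le_mul p2L p2W (Real.exp_pos _).le (Real.exp_pos _).le)
          (by positivity) (by positivity)
    _ = 2 ^ ((3:ℝ)/4) *
        (T ^ (-(3:ℝ)/4) *
          ((|u| ^ (-(1:ℝ)/2) * Real.exp (-u ^ 2 / (4*L))) * Real.exp (-u ^ 2 / (4*W)))) := by
        rw [Real.mul_rpow (by norm_num) hT.le]
        have hTT : T ^ (-(3:ℝ)/2) * T ^ ((3:ℝ)/4) = T ^ (-(3:ℝ)/4) := by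
          rw [← Real.rpow_add hT]; norm_num
        calc (T ^ (-(3:ℝ)/2) * |u| ^ (-(1:ℝ)/2)) *
              (2 ^ ((3:ℝ)/4) * T ^ ((3:ℝ)/4) *
                (Real.exp (-u ^ 2 / (4*L)) * Real.exp (-u ^ 2 / (4*W))))
            = 2 ^ ((3:ℝ)/4) * ((T ^ (-(3:ℝ)/2) * T ^ ((3:ℝ)/4)) *
                (|u| ^ (-(1:ℝ)/2) *
                  (Real.exp (-u ^ 2 / (4*L)) * Real.exp (-u ^ 2 / (4*W))))) := by ring
          _ = _ := by rw [hTT]; ring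

lemma sum_factor_bound {W v s : ℝ} (hW : 0 < W) (hvs : v ^ 2 ≤ s) (hs : 0 ≤ s) :
    W ^ (-(3:ℝ)/2) * |v| * Real.exp (-(s / (4*W))) ≤
      4 ^ ((9:ℝ)/16) * (W ^ (-(15:ℝ)/16) * |v| ^ (-(1:ℝ)/8)) := by
  rcases eq_or_ne v 0 with rfl | hv
  · simp [Real.zero_rpow (by norm_num : (-(1:ℝ)/8) ≠ 0)]
  have hav : 0 < |v| := abs_pos.2 hv
  have hsplit : |v| = |v| ^ (-(1:ℝ)/8) * |v| ^ ((9:ℝ)/8) := by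
    rw [← Real.rpow_add hav]; norm_num
  have h0 : |v| ^ ((9:ℝ)/8) = (v ^ 2) ^ ((9:ℝ)/16) := by
    rw [sq_rpow]; norm_num
  have key : |v| ^ ((9:ℝ)/8) * Real.exp (-(s / (4*W))) ≤ (4*W) ^ ((9:ℝ)/16) := by
    calc |v| ^ ((9:ℝ)/8) * Real.exp (-(s / (4*W)))
        ≤ s ^ ((9:ℝ)/16) * Real.exp (-(s / (4*W))) := by
          apply mul_le_mul_of_nonneg_right _ (Real.exp_pos _).le
          rw [h0]
          exact Real.rpow_le_rpow (sq_nonneg v) hvs (by norm_num)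
      _ ≤ (4*W) ^ ((9:ℝ)/16) :=
          aux1 (by norm_num) (by norm_num) (by linarith) hs
  have hWW : W ^ (-(3:ℝ)/2) * W ^ ((9:ℝ)/16) = W ^ (-(15:ℝ)/16) := by
    rw [← Real.rpow_add hW]; norm_num
  calc W ^ (-(3:ℝ)/2) * |v| * Real.exp (-(s / (4*W)))
      = (W ^ (-(3:ℝ)/2) * |v| ^ (-(1:ℝ)/8)) * (|v| ^ ((9:ℝ)/8) * Real.exp (-(s / (4*W)))) := by
        nth_rewrite 1 [hsplit]; ring
    _ ≤ (W ^ (-(3:ℝ)/2) * |v| ^ (-(1:ℝ)/8)) * (4*W) ^ ((9:ℝ)/16) := by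
        apply mul_le_mul_of_nonneg_left key (by positivity)
    _ = 4 ^ ((9:ℝ)/16) * (W ^ (-(15:ℝ)/16) * |v| ^ (-(1:ℝ)/8)) := by
        rw [Real.mul_rpow (by norm_num) hW.le, ← hWW]; ring

lemma tau_bound {L T c d : ℝ} (hT : 0 < T) (hTL : T ≤ L) (hcd : c ≤ d) :
    T ^ (-c) ≤ (L ^ (d - c) * Real.exp (L/4)) * (|T| ^ (-d) * Real.exp (-T ^ 2 / (4*L))) := by
  have hL : 0 < L := lt_of_lt_of_le hT hTL
  have h1 : T ^ (-c) = T ^ (-d) * T ^ (d - c) := by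
    rw [← Real.rpow_add hT]; ring_nf
  have h2 : T ^ (d - c) ≤ L ^ (d - c) := Real.rpow_le_rpow hT.le hTL (by linarith)
  have h3 : (1:ℝ) ≤ Real.exp (L/4) * Real.exp (-T ^ 2 / (4*L)) := by
    rw [← Real.exp_add, ← Real.exp_zero]
    apply Real.exp_le_exp.2
    rw [neg_div]
    have : T ^ 2 / (4*L) ≤ L / 4 := by
      rw [div_le_div_iff₀ (by linarith) (by norm_num)]
      nlinarith
    linarith
  have hTd : (0:ℝ) ≤ T ^ (-d) := Real.rpow_nonneg hT.le _
  rw [abs_of_pos hT]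
  calc T ^ (-c) = T ^ (-d) * T ^ (d - c) * 1 := by rw [← h1]; ring
    _ ≤ T ^ (-d) * L ^ (d - c) * (Real.exp (L/4) * Real.exp (-T ^ 2 / (4*L))) := by
        apply mul_le_mul (mul_le_mul_of_nonneg_left h2 hTd) h3 one_pos.le (by positivity)
    _ = (L ^ (d - c) * Real.exp (L/4)) * (T ^ (-d) * Real.exp (-T ^ 2 / (4*L))) := by ring

lemma int1d {c a : ℝ} (hc : 0 < c) (ha0 : 0 ≤ a) (ha1 : a < 1) :
    Integrable fun x : ℝ => |x| ^ (-a) * Real.exp (-x ^ 2 / c) := by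
  have hb : 0 < 1/c := by positivity
  have hform : ∀ x : ℝ, Real.exp (-x ^ 2 / c) = Real.exp (-(1/c) * x ^ 2) := by
    intro x; congr 1; field_simp
  have hIoi : IntegrableOn (fun x : ℝ => |x| ^ (-a) * Real.exp (-(1/c) * x ^ 2)) (Ioi 0) := by
    apply (integrableOn_rpow_mul_exp_neg_mul_sq hb (by linarith : (-1:ℝ) < -a)).congr_fun
    · intro x hx
      simp only []
      rw [abs_of_pos (mem_Ioi.1 hx)]
    · exact measurableSet_Ioi
  have main : Integrable fun x : ℝ => |x| ^ (-a) * Real.exp (-(1/c) * x ^ 2) := by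
    rw [← integrableOn_univ, ← @Iio_union_Ici _ _ (0 : ℝ), integrableOn_union,
      integrableOn_Ici_iff_integrableOn_Ioi]
    refine ⟨?_, hIoi⟩
    rw [← (Measure.measurePreserving_neg (volume : Measure ℝ)).integrableOn_comp_preimage
        (Homeomorph.neg ℝ).measurableEmbedding]
    simp only [Function.comp_def, neg_preimage, neg_Iio, neg_neg, neg_zero, abs_neg, neg_sq]
    exact hIoi
  exact main.congr (Filter.Eventually.of_forall fun x => by simp only []; rw [hform x])

lemma prod_split {M : Type*} [CommMonoid M] (n : ℕ) (hn : 1 ≤ n) (F : Fin n → M) :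
    ∏ i : Fin n, F i =
      (∏ i : Fin (n - 1), F (Fin.castLE (Nat.sub_le n 1) i)) * F ⟨n - 1, by omega⟩ := by
  obtain ⟨m, rfl⟩ : ∃ m, n = m + 1 := ⟨n - 1, by omega⟩
  exact Fin.prod_univ_castSucc F

noncomputable def tauF (L x : ℝ) : ℝ := |x| ^ (-(15:ℝ)/16) * Real.exp (-x ^ 2 / (4*L))

noncomputable def rhoF (L : ℝ) {k : ℕ} (j i : Fin k) (v : ℝ) : ℝ :=
  |v| ^ (if i = j then -(5:ℝ)/8 else -(1:ℝ)/2) * Real.exp (-v ^ 2 / (4*L))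

noncomputable def CC1 (L : ℝ) : ℝ := 2 ^ ((3:ℝ)/4) * (L ^ ((15:ℝ)/16 - (3:ℝ)/4) * Real.exp (L/4))
noncomputable def CC2 (L : ℝ) : ℝ := 4 ^ ((9:ℝ)/16) * (L ^ ((15:ℝ)/16 - (15:ℝ)/16) * Real.exp (L/4))

lemma tauF_nonneg (L x : ℝ) : 0 ≤ tauF L x :=
  mul_nonneg (Real.rpow_nonneg (abs_nonneg _) _) (Real.exp_pos _).le

lemma rhoF_nonneg (L : ℝ) {k : ℕ} (j i : Fin k) (v : ℝ) : 0 ≤ rhoF L j i v :=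
  mul_nonneg (Real.rpow_nonneg (abs_nonneg _) _) (Real.exp_pos _).le

lemma CC1_nonneg (L : ℝ) (hL : 0 < L) : 0 ≤ CC1 L := by unfold CC1; positivity
lemma CC2_nonneg (L : ℝ) (hL : 0 < L) : 0 ≤ CC2 L := by unfold CC2; positivity

lemma rho_eq (L : ℝ) {k : ℕ} (j : Fin k) (u : Fin k → ℝ) :
    (∏ i, (|u i| ^ (-(1:ℝ)/2) * Real.exp (-(u i) ^ 2 / (4*L)))) * |u j| ^ (-(1:ℝ)/8)
      = ∏ i, rhoF L j i (u i) := by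
  have key : ∀ i, rhoF L j i (u i) =
      (|u i| ^ (-(1:ℝ)/2) * Real.exp (-(u i) ^ 2 / (4*L))) *
        (if i = j then |u i| ^ (-(1:ℝ)/8) else 1) := by
    intro i
    unfold rhoF
    by_cases h : i = j
    · rw [if_pos h, if_pos h]
      rcases eq_or_ne (u i) 0 with h0 | h0
      · rw [h0]
        simp [Real.zero_rpow (show (-(5:ℝ)/8) ≠ 0 by norm_num),
          Real.zero_rpow (show (-(1:ℝ)/2) ≠ 0 by norm_num)]
      · rw [show (-(5:ℝ)/8) = (-(1:ℝ)/2) + (-(1:ℝ)/8) by norm_num,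
          Real.rpow_add (abs_pos.2 h0)]
        ring
    · rw [if_neg h, if_neg h, mul_one]
  rw [Finset.prod_congr rfl (fun i _ => key i)]
  conv_rhs => rw [Finset.prod_mul_distrib,
    Finset.prod_ite_eq' Finset.univ j (fun i => |u i| ^ (-(1:ℝ)/8)),
    if_pos (Finset.mem_univ j)]

lemma pt_bound (n : ℕ) (hn : 2 ≤ n) (L : ℝ) (hL : 0 < L) (hℓ : n - 1 < n)
    (t : Fin n → ℝ) (u : Fin (n - 1) → ℝ)
    (h0 : ∀ i, 0 < t i) (hmono : ∀ i j : Fin n, i ≤ j → t i ≤ t j) (hle : ∀ i, t i ≤ L) :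
    (∏ i : Fin (n - 1),
        (t (Fin.castLE (Nat.sub_le n 1) i)) ^ (-(3 : ℝ) / 2) * |u i| *
          Real.exp (-(u i) ^ 2 / t (Fin.castLE (Nat.sub_le n 1) i))) *
      ((t ⟨n - 1, hℓ⟩) ^ (-(3 : ℝ) / 2) * (∑ i : Fin (n - 1), |u i|) *
        Real.exp (-(∑ i : Fin (n - 1), u i) ^ 2 / t ⟨n - 1, hℓ⟩)) ≤
    (CC1 L ^ (n - 1) * CC2 L) *
      ((∏ i : Fin n, tauF L (t i)) * (∑ j : Fin (n - 1), ∏ i : Fin (n - 1), rhoF L j i (u i))) := by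
  set cst : Fin (n - 1) → Fin n := Fin.castLE (Nat.sub_le n 1) with hcst
  set ℓ : Fin n := ⟨n - 1, hℓ⟩ with hℓdef
  set W : ℝ := t ℓ with hWdef
  have hW0 : 0 < W := h0 ℓ
  have hWL : W ≤ L := hle ℓ
  have hcW : ∀ i : Fin (n - 1), t (cst i) ≤ W := by
    intro i
    apply hmono
    rw [Fin.le_def]
    have := i.isLt
    simp only [hcst, Fin.coe_castLE, hℓdef]
    omega
  set X : Fin (n - 1) → ℝ := fun i => |u i| ^ (-(1:ℝ)/2) * Real.exp (-(u i) ^ 2 / (4*L)) with hX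
  have hX0 : ∀ i, 0 ≤ X i := fun i =>
    mul_nonneg (Real.rpow_nonneg (abs_nonneg _) _) (Real.exp_pos _).le
  set s : ℝ := ∑ i, (u i) ^ 2 with hs
  have hs0 : 0 ≤ s := Finset.sum_nonneg fun i _ => sq_nonneg _
  set P : ℝ := ∏ i : Fin (n - 1),
      (t (cst i)) ^ (-(3 : ℝ) / 2) * |u i| * Real.exp (-(u i) ^ 2 / t (cst i)) with hP
  have hP0 : 0 ≤ P := Finset.prod_nonneg fun i _ =>
    mul_nonneg (mul_nonneg (Real.rpow_nonneg (h0 _).le _) (abs_nonneg _)) (Real.exp_pos _).le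
  -- per-factor bound
  have hfac : ∀ i : Fin (n - 1),
      (t (cst i)) ^ (-(3 : ℝ) / 2) * |u i| * Real.exp (-(u i) ^ 2 / t (cst i)) ≤
        CC1 L * (tauF L (t (cst i)) * (X i * Real.exp (-(u i) ^ 2 / (4*W)))) := by
    intro i
    have h1 := factor_bound (L := L) (W := W) (u := u i) (h0 (cst i)) (hcW i) (hle (cst i))
    refine h1.trans ?_
    have h2 := tau_bound (h0 (cst i)) (hle (cst i)) (show (3:ℝ)/4 ≤ (15:ℝ)/16 by norm_num)
    have h2' : (t (cst i)) ^ (-(3:ℝ)/4) ≤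
        (L ^ ((15:ℝ)/16 - (3:ℝ)/4) * Real.exp (L/4)) * tauF L (t (cst i)) := by
      rw [neg_div]
      unfold tauF
      calc t (cst i) ^ (-((3:ℝ)/4)) ≤
          (L ^ ((15:ℝ)/16 - (3:ℝ)/4) * Real.exp (L/4)) *
            (|t (cst i)| ^ (-((15:ℝ)/16)) * Real.exp (-(t (cst i)) ^ 2 / (4*L))) := h2
        _ = _ := by norm_num
    calc 2 ^ ((3:ℝ)/4) * ((t (cst i)) ^ (-(3:ℝ)/4) *
            ((|u i| ^ (-(1:ℝ)/2) * Real.exp (-(u i) ^ 2 / (4*L))) * Real.exp (-(u i) ^ 2 / (4*W))))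
        ≤ 2 ^ ((3:ℝ)/4) * (((L ^ ((15:ℝ)/16 - (3:ℝ)/4) * Real.exp (L/4)) * tauF L (t (cst i))) *
            ((|u i| ^ (-(1:ℝ)/2) * Real.exp (-(u i) ^ 2 / (4*L))) * Real.exp (-(u i) ^ 2 / (4*W)))) := by
          apply mul_le_mul_of_nonneg_left _ (by positivity)
          apply mul_le_mul_of_nonneg_right h2' (by positivity)
      _ = CC1 L * (tauF L (t (cst i)) * (X i * Real.exp (-(u i) ^ 2 / (4*W)))) := by
          unfold CC1; rw [hX]; ring
  -- product bound
  have hPb : P ≤ ∏ i : Fin (n - 1),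
      (CC1 L * (tauF L (t (cst i)) * (X i * Real.exp (-(u i) ^ 2 / (4*W))))) := by
    rw [hP]
    apply Finset.prod_le_prod (fun i _ =>
      mul_nonneg (mul_nonneg (Real.rpow_nonneg (h0 _).le _) (abs_nonneg _)) (Real.exp_pos _).le)
      (fun i _ => hfac i)
  have hProdEq : ∏ i : Fin (n - 1),
      (CC1 L * (tauF L (t (cst i)) * (X i * Real.exp (-(u i) ^ 2 / (4*W)))))
      = CC1 L ^ (n - 1) *
          ((∏ i, tauF L (t (cst i))) * ((∏ i, X i) * Real.exp (-(s / (4*W))))) := by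
    rw [Finset.prod_mul_distrib, Finset.prod_const, Finset.card_univ, Fintype.card_fin,
      Finset.prod_mul_distrib, Finset.prod_mul_distrib, ← Real.exp_sum]
    congr 2
    simp only [hs, neg_div, Finset.sum_neg_distrib, Finset.sum_div]
  -- combined W bound
  have hWcomb : ∀ j : Fin (n - 1),
      W ^ (-(3:ℝ)/2) * |u j| * Real.exp (-(s / (4*W))) ≤
        CC2 L * (tauF L W * |u j| ^ (-(1:ℝ)/8)) := by
    intro j
    have h4 := sum_factor_bound (v := u j) hW0
      (Finset.single_le_sum (fun i _ => sq_nonneg (u i)) (Finset.mem_univ j)) hs0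
    refine h4.trans ?_
    have h5 := tau_bound hW0 hWL (le_refl ((15:ℝ)/16))
    have h5' : W ^ (-(15:ℝ)/16) ≤
        (L ^ ((15:ℝ)/16 - (15:ℝ)/16) * Real.exp (L/4)) * tauF L W := by
      rw [neg_div]
      unfold tauF
      calc W ^ (-((15:ℝ)/16)) ≤
          (L ^ ((15:ℝ)/16 - (15:ℝ)/16) * Real.exp (L/4)) *
            (|W| ^ (-((15:ℝ)/16)) * Real.exp (-W ^ 2 / (4*L))) := h5
        _ = _ := by norm_num
    calc 4 ^ ((9:ℝ)/16) * (W ^ (-(15:ℝ)/16) * |u j| ^ (-(1:ℝ)/8))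
        ≤ 4 ^ ((9:ℝ)/16) * ((((L ^ ((15:ℝ)/16 - (15:ℝ)/16) * Real.exp (L/4)) * tauF L W)) *
            |u j| ^ (-(1:ℝ)/8)) := by
          apply mul_le_mul_of_nonneg_left _ (by positivity)
          apply mul_le_mul_of_nonneg_right h5' (Real.rpow_nonneg (abs_nonneg _) _)
      _ = CC2 L * (tauF L W * |u j| ^ (-(1:ℝ)/8)) := by unfold CC2; ring
  -- per-term bound
  have hE1 : Real.exp (-(∑ i : Fin (n - 1), u i) ^ 2 / W) ≤ 1 := by
    apply Real.exp_le_one_iff.2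
    apply div_nonpos_of_nonpos_of_nonneg (neg_nonpos.2 (sq_nonneg _)) hW0.le
  have hterm : ∀ j : Fin (n - 1),
      P * (W ^ (-(3 : ℝ) / 2) * |u j| * Real.exp (-(∑ i : Fin (n - 1), u i) ^ 2 / W)) ≤
        (CC1 L ^ (n - 1) * CC2 L) * ((∏ i : Fin n, tauF L (t i)) * (∏ i, rhoF L j i (u i))) := by
    intro j
    have hWj0 : 0 ≤ W ^ (-(3:ℝ)/2) * |u j| :=
      mul_nonneg (Real.rpow_nonneg hW0.le _) (abs_nonneg _)
    calc P * (W ^ (-(3 : ℝ) / 2) * |u j| * Real.exp (-(∑ i : Fin (n - 1), u i) ^ 2 / W))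
        ≤ P * (W ^ (-(3 : ℝ) / 2) * |u j| * 1) := by
          apply mul_le_mul_of_nonneg_left (mul_le_mul_of_nonneg_left hE1 hWj0) hP0
      _ = P * (W ^ (-(3 : ℝ) / 2) * |u j|) := by ring
      _ ≤ (CC1 L ^ (n - 1) *
            ((∏ i, tauF L (t (cst i))) * ((∏ i, X i) * Real.exp (-(s / (4*W)))))) *
            (W ^ (-(3 : ℝ) / 2) * |u j|) := by
          apply mul_le_mul_of_nonneg_right (hPb.trans (le_of_eq hProdEq)) hWj0
      _ = (CC1 L ^ (n - 1) * (∏ i, tauF L (t (cst i))) * (∏ i, X i)) *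
            (W ^ (-(3:ℝ)/2) * |u j| * Real.exp (-(s / (4*W)))) := by ring
      _ ≤ (CC1 L ^ (n - 1) * (∏ i, tauF L (t (cst i))) * (∏ i, X i)) *
            (CC2 L * (tauF L W * |u j| ^ (-(1:ℝ)/8))) := by
          apply mul_le_mul_of_nonneg_left (hWcomb j)
          apply mul_nonneg (mul_nonneg (pow_nonneg (CC1_nonneg L hL) _)
            (Finset.prod_nonneg fun i _ => tauF_nonneg L _)) (Finset.prod_nonneg fun i _ => hX0 i)
      _ = (CC1 L ^ (n - 1) * CC2 L) *
            (((∏ i, tauF L (t (cst i))) * tauF L W) * ((∏ i, X i) * |u j| ^ (-(1:ℝ)/8))) := by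
          ring
      _ = (CC1 L ^ (n - 1) * CC2 L) *
            ((∏ i : Fin n, tauF L (t i)) * (∏ i, rhoF L j i (u i))) := by
          rw [← prod_split n (by omega) (fun i => tauF L (t i))]
          rw [hX, rho_eq L j u]
  -- sum up
  have hsum : P * (W ^ (-(3 : ℝ) / 2) * (∑ i : Fin (n - 1), |u i|) *
        Real.exp (-(∑ i : Fin (n - 1), u i) ^ 2 / W))
      = ∑ j : Fin (n - 1),
          P * (W ^ (-(3 : ℝ) / 2) * |u j| * Real.exp (-(∑ i : Fin (n - 1), u i) ^ 2 / W)) := by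
    rw [Finset.mul_sum, Finset.sum_mul, Finset.mul_sum]
  calc P * (W ^ (-(3 : ℝ) / 2) * (∑ i : Fin (n - 1), |u i|) *
        Real.exp (-(∑ i : Fin (n - 1), u i) ^ 2 / W))
      = ∑ j : Fin (n - 1),
          P * (W ^ (-(3 : ℝ) / 2) * |u j| * Real.exp (-(∑ i : Fin (n - 1), u i) ^ 2 / W)) := hsum
    _ ≤ ∑ j : Fin (n - 1), (CC1 L ^ (n - 1) * CC2 L) *
          ((∏ i : Fin n, tauF L (t i)) * (∏ i, rhoF L j i (u i))) :=
        Finset.sum_le_sum fun j _ => hterm j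
    _ = (CC1 L ^ (n - 1) * CC2 L) *
          ((∏ i : Fin n, tauF L (t i)) * (∑ j : Fin (n - 1), ∏ i, rhoF L j i (u i))) := by
        rw [← Finset.mul_sum, ← Finset.mul_sum]


/-- For `n ≥ 2` and `L > 0`, the function
`(t, u) ↦ (∏_{i=1}^{n-1} t_i^{-3/2} |u_i| e^{-u_i²/t_i}) · t_n^{-3/2} (∑_i |u_i|) e^{-(∑_i u_i)²/t_n}`
is Lebesgue integrable on `Δⁿ(0,L) × ℝ^{n-1}`, where `Δⁿ(0,L)` is the ordered simplex
`{t : 0 < t₁ ≤ ⋯ ≤ t_n ≤ L}`. -/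
theorem stmt6 (n : ℕ) (hn : 2 ≤ n) (L : ℝ) (hL : 0 < L) :
    MeasureTheory.IntegrableOn
      (fun p : (Fin n → ℝ) × (Fin (n - 1) → ℝ) =>
        (∏ i : Fin (n - 1),
            (p.1 (Fin.castLE (Nat.sub_le n 1) i)) ^ (-(3 : ℝ) / 2) * |p.2 i| *
              Real.exp (-(p.2 i) ^ 2 / p.1 (Fin.castLE (Nat.sub_le n 1) i))) *
          ((p.1 ⟨n - 1, by omega⟩) ^ (-(3 : ℝ) / 2) * (∑ i : Fin (n - 1), |p.2 i|) *
            Real.exp (-(∑ i : Fin (n - 1), p.2 i) ^ 2 / p.1 ⟨n - 1, by omega⟩)))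
      ({t : Fin n → ℝ |
          (∀ i, 0 < t i) ∧ (∀ i j : Fin n, i ≤ j → t i ≤ t j) ∧ ∀ i, t i ≤ L} ×ˢ
        (Set.univ : Set (Fin (n - 1) → ℝ))) := by
  have h4L : (0:ℝ) < 4 * L := by linarith
  have hτint : Integrable (fun x : ℝ => tauF L x) := by
    unfold tauF
    have h := int1d (c := 4*L) (a := (15:ℝ)/16) h4L (by norm_num) (by norm_num)
    rw [show -((15:ℝ)/16) = (-(15:ℝ)/16) by norm_num] at h
    exact h
  have hρint : ∀ j i : Fin (n - 1), Integrable (fun v => rhoF L j i v) := by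
    intro j i; unfold rhoF
    by_cases h : i = j
    · simp only [if_pos h]
      have h := int1d (c := 4*L) (a := (5:ℝ)/8) h4L (by norm_num) (by norm_num)
      rw [show -((5:ℝ)/8) = (-(5:ℝ)/8) by norm_num] at h
      exact h
    · simp only [if_neg h]
      have h := int1d (c := 4*L) (a := (1:ℝ)/2) h4L (by norm_num) (by norm_num)
      rw [show -((1:ℝ)/2) = (-(1:ℝ)/2) by norm_num] at h
      exact h
  have hTint : Integrable (fun t : Fin n → ℝ => ∏ i, tauF L (t i)) :=
    Integrable.fintype_prod (f := fun _ : Fin n => tauF L) fun _ => hτint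
  have hUint : Integrable (fun u : Fin (n - 1) → ℝ => ∑ j, ∏ i, rhoF L j i (u i)) :=
    integrable_finset_sum _ fun j _ =>
      Integrable.fintype_prod (f := fun i => rhoF L j i) fun i => hρint j i
  have hgint : Integrable (fun p : (Fin n → ℝ) × (Fin (n - 1) → ℝ) =>
      (CC1 L ^ (n - 1) * CC2 L) *
        ((∏ i, tauF L (p.1 i)) * (∑ j, ∏ i, rhoF L j i (p.2 i)))) := by
    have := (hTint.mul_prod hUint).const_mul (CC1 L ^ (n - 1) * CC2 L)
    rwa [← MeasureTheory.Measure.volume_eq_prod] at this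
  have hS : MeasurableSet {t : Fin n → ℝ |
      (∀ i, 0 < t i) ∧ (∀ i j : Fin n, i ≤ j → t i ≤ t j) ∧ ∀ i, t i ≤ L} := by
    have e : {t : Fin n → ℝ |
        (∀ i, 0 < t i) ∧ (∀ i j : Fin n, i ≤ j → t i ≤ t j) ∧ ∀ i, t i ≤ L} =
        (⋂ i, {t : Fin n → ℝ | 0 < t i}) ∩
          ((⋂ i : Fin n, ⋂ j : Fin n, {t : Fin n → ℝ | i ≤ j → t i ≤ t j}) ∩
            (⋂ i, {t : Fin n → ℝ | t i ≤ L})) := by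
      ext t
      simp only [Set.mem_setOf_eq, Set.mem_inter_iff, Set.mem_iInter]
    rw [e]
    apply MeasurableSet.inter
    · exact MeasurableSet.iInter fun i =>
        measurableSet_lt measurable_const (measurable_pi_apply i)
    apply MeasurableSet.inter
    · refine MeasurableSet.iInter fun i => MeasurableSet.iInter fun j => ?_
      by_cases hij : i ≤ j
      · simp only [hij, true_implies]
        exact measurableSet_le (measurable_pi_apply i) (measurable_pi_apply j)
      · simp only [hij, false_implies, Set.setOf_true]
        exact MeasurableSet.univ
    · exact MeasurableSet.iInter fun i =>
        measurableSet_le (measurable_pi_apply i) measurable_const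
  have hfmeas : Measurable (fun p : (Fin n → ℝ) × (Fin (n - 1) → ℝ) =>
      (∏ i : Fin (n - 1),
          (p.1 (Fin.castLE (Nat.sub_le n 1) i)) ^ (-(3 : ℝ) / 2) * |p.2 i| *
            Real.exp (-(p.2 i) ^ 2 / p.1 (Fin.castLE (Nat.sub_le n 1) i))) *
        ((p.1 ⟨n - 1, by omega⟩) ^ (-(3 : ℝ) / 2) * (∑ i : Fin (n - 1), |p.2 i|) *
          Real.exp (-(∑ i : Fin (n - 1), p.2 i) ^ 2 / p.1 ⟨n - 1, by omega⟩))) := by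
    apply Measurable.mul
    · apply Finset.measurable_prod
      intro i _
      apply Measurable.mul
      · apply Measurable.mul
        · exact ((measurable_pi_apply _).comp measurable_fst).pow measurable_const
        · exact ((measurable_pi_apply i).comp measurable_snd).abs
      · apply Measurable.exp
        apply Measurable.div
        · exact (((measurable_pi_apply i).comp measurable_snd).pow_const 2).neg
        · exact (measurable_pi_apply _).comp measurable_fst
    · apply Measurable.mul
      · apply Measurable.mul
        · exact ((measurable_pi_apply _).comp measurable_fst).pow measurable_const
        · exact Finset.measurable_sum _ fun i _ =>
            ((measurable_pi_apply i).comp measurable_snd).abs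
      · apply Measurable.exp
        apply Measurable.div
        · exact ((Finset.measurable_sum _ fun i _ =>
            (measurable_pi_apply i).comp measurable_snd).pow_const 2).neg
        · exact (measurable_pi_apply _).comp measurable_fst
  apply Integrable.mono (hgint.integrableOn) (hfmeas.aestronglyMeasurable.restrict)
  refine (ae_restrict_iff' (hS.prod MeasurableSet.univ)).2 (Filter.Eventually.of_forall ?_)
  rintro ⟨t, u⟩ ⟨⟨h0, hmono, hle⟩, -⟩
  dsimp only
  have hf0 : 0 ≤ (∏ i : Fin (n - 1),
      (t (Fin.castLE (Nat.sub_le n 1) i)) ^ (-(3 : ℝ) / 2) * |u i| *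
        Real.exp (-(u i) ^ 2 / t (Fin.castLE (Nat.sub_le n 1) i))) *
      ((t ⟨n - 1, by omega⟩) ^ (-(3 : ℝ) / 2) * (∑ i : Fin (n - 1), |u i|) *
        Real.exp (-(∑ i : Fin (n - 1), u i) ^ 2 / t ⟨n - 1, by omega⟩)) := by
    apply mul_nonneg
    · exact Finset.prod_nonneg fun i _ =>
        mul_nonneg (mul_nonneg (Real.rpow_nonneg (h0 _).le _) (abs_nonneg _)) (Real.exp_pos _).le
    · exact mul_nonneg (mul_nonneg (Real.rpow_nonneg (h0 _).le _)
        (Finset.sum_nonneg fun i _ => abs_nonneg _)) (Real.exp_pos _).le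
  have hg0 : 0 ≤ (CC1 L ^ (n - 1) * CC2 L) *
      ((∏ i, tauF L (t i)) * (∑ j, ∏ i, rhoF L j i (u i))) := by
    apply mul_nonneg (mul_nonneg (pow_nonneg (CC1_nonneg L hL) _) (CC2_nonneg L hL))
    apply mul_nonneg (Finset.prod_nonneg fun i _ => tauF_nonneg L _)
    exact Finset.sum_nonneg fun j _ => Finset.prod_nonneg fun i _ => rhoF_nonneg L _ _ _
  rw [Real.norm_eq_abs, Real.norm_eq_abs, abs_of_nonneg hf0, abs_of_nonneg hg0]
  exact pt_bound n hn L hL (by omega) t u h0 hmono hle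
end

section
/- Let A be a ℤ-graded associative unital ring and let δ : A → A be an additive map raising degree by 1, satisfying the graded Leibniz rule δ(xy) = δ(x)y + (−1)ⁿ x δ(y) for x homogeneous of degree n, and δ∘δ = 0. Let D : A → A be another additive map raising degree by 1 satisfying the graded Leibniz rule, with D∘D = 0 and δ∘D + D∘δ = 0. Let a, b ∈ A be homogeneous of degree 1 and suppose δ(a) + a² = 0. Define the Atiyah element α = D(a) + δ(b) + ab + ba. Then δ(α) + aα − αa = 0; that is, the Atiyah class is closed with respect to the internal differential δ + [a, −] on endomorphism-valued forms. -/
/-- In a ℤ-graded associative unital ring `A` with an internal differential `δ` and a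
de Rham differential `D` (both additive, of degree `+1`, square-zero, anticommuting,
satisfying the graded Leibniz rule), if `a, b` are homogeneous of degree `1` and
`δ a + a² = 0` (i.e. `d_M = d_R + a` squares to zero), then the Atiyah element
`α = D a + δ b + ab + ba` satisfies `δ α + aα - αa = 0`: the Atiyah class is closed for
the internal differential `δ + [a, -]`. -/
theorem stmt12 (A : Type*) [Ring A] (ℬ : ℤ → AddSubgroup A)
    (hone : (1 : A) ∈ ℬ 0)
    (hmul : ∀ (m n : ℤ) (x y : A), x ∈ ℬ m → y ∈ ℬ n → x * y ∈ ℬ (m + n))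
    (δ D : A →+ A)
    (hδdeg : ∀ (n : ℤ) (x : A), x ∈ ℬ n → δ x ∈ ℬ (n + 1))
    (hDdeg : ∀ (n : ℤ) (x : A), x ∈ ℬ n → D x ∈ ℬ (n + 1))
    (hδLeib : ∀ (n : ℤ) (x y : A), x ∈ ℬ n →
      δ (x * y) = δ x * y + (if Even n then x * δ y else -(x * δ y)))
    (hDLeib : ∀ (n : ℤ) (x y : A), x ∈ ℬ n →
      D (x * y) = D x * y + (if Even n then x * D y else -(x * D y)))
    (hδδ : ∀ x : A, δ (δ x) = 0)
    (hDD : ∀ x : A, D (D x) = 0)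
    (hanti : ∀ x : A, δ (D x) + D (δ x) = 0)
    (a b : A) (ha : a ∈ ℬ 1) (hb : b ∈ ℬ 1)
    (hflat : δ a + a * a = 0) :
    δ (D a + δ b + a * b + b * a) + a * (D a + δ b + a * b + b * a)
      - (D a + δ b + a * b + b * a) * a = 0 := by
  have hodd : ¬ Even (1 : ℤ) := by decide
  have h1 : δ a = -(a * a) := eq_neg_of_add_eq_zero_left hflat
  have h2 : δ (D a) = D a * a - a * D a := by
    have e1 : δ (D a) = - D (δ a) := eq_neg_of_add_eq_zero_left (hanti a)
    rw [e1, h1, map_neg, hDLeib 1 a a ha, if_neg hodd]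
    noncomm_ring
  have h3 : δ (a * b) = -(a * a) * b - a * δ b := by
    rw [hδLeib 1 a b ha, if_neg hodd, h1]; noncomm_ring
  have h4 : δ (b * a) = δ b * a + b * (a * a) := by
    rw [hδLeib 1 b a hb, if_neg hodd, h1]; noncomm_ring
  rw [map_add, map_add, map_add, h2, h3, h4, hδδ b]
  noncomm_ring
end

section
/- Let A be a ℤ-graded associative unital ring and let δ : A → A be an additive map raising degree by 1, satisfying the graded Leibniz rule δ(xy) = δ(x)y + (−1)ⁿ x δ(y) for x homogeneous of degree n, and δ∘δ = 0. Let D : A → A be another additive map raising degree by 1 satisfying the graded Leibniz rule, with D∘D = 0 and δ∘D + D∘δ = 0. Let a, b ∈ A be homogeneous of degree 1 and suppose D(b) + b² = 0. Define the Atiyah element α = D(a) + δ(b) + ab + ba. Then D(α) + bα − αb = 0; that is, the Atiyah class is a horizontal section for the induced connection D + [b, −] on endomorphism-valued forms. -/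
/-- In a ℤ-graded associative unital ring `A` with an internal differential `δ` and a
de Rham differential `D` (both additive, of degree `+1`, square-zero, anticommuting,
satisfying the graded Leibniz rule), if `a, b` are homogeneous of degree `1` and
`D b + b² = 0` (flatness of the connection `∇ = d_dR + b`), then the Atiyah element
`α = D a + δ b + ab + ba` satisfies `D α + bα - αb = 0`: the Atiyah class is a horizontal
section for the induced connection `D + [b, -]` (the Bianchi identity). -/
theorem stmt13 (A : Type*) [Ring A] (ℬ : ℤ → AddSubgroup A)
    (hone : (1 : A) ∈ ℬ 0)
    (hmul : ∀ (m n : ℤ) (x y : A), x ∈ ℬ m → y ∈ ℬ n → x * y ∈ ℬ (m + n))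
    (δ D : A →+ A)
    (hδdeg : ∀ (n : ℤ) (x : A), x ∈ ℬ n → δ x ∈ ℬ (n + 1))
    (hDdeg : ∀ (n : ℤ) (x : A), x ∈ ℬ n → D x ∈ ℬ (n + 1))
    (hδLeib : ∀ (n : ℤ) (x y : A), x ∈ ℬ n →
      δ (x * y) = δ x * y + (if Even n then x * δ y else -(x * δ y)))
    (hDLeib : ∀ (n : ℤ) (x y : A), x ∈ ℬ n →
      D (x * y) = D x * y + (if Even n then x * D y else -(x * D y)))
    (hδδ : ∀ x : A, δ (δ x) = 0)
    (hDD : ∀ x : A, D (D x) = 0)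
    (hanti : ∀ x : A, δ (D x) + D (δ x) = 0)
    (a b : A) (ha : a ∈ ℬ 1) (hb : b ∈ ℬ 1)
    (hflat : D b + b * b = 0) :
    D (D a + δ b + a * b + b * a) + b * (D a + δ b + a * b + b * a)
      - (D a + δ b + a * b + b * a) * b = 0 := by
  have hE : ¬ Even (1:ℤ) := by decide
  have e1 := hDLeib 1 a b ha
  have e2 := hDLeib 1 b a hb
  have e3 := hδLeib 1 b b hb
  simp only [if_neg hE] at e1 e2 e3
  have h4 : D b = -(b*b) := eq_neg_of_add_eq_zero_left hflat
  have h3 : D (δ b) = - δ (D b) := eq_neg_of_add_eq_zero_right (hanti b)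
  rw [map_add, map_add, map_add, hDD a, h3, e1, e2, h4, map_neg, e3]
  noncomm_ring
end
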